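/- Every function σ ∈ C^{d+1}(ℝ^d) all of whose derivatives up to order d+1 are bounded belongs to the modulation space M^{∞,1}(ℝ^d), and hence to the Wiener amalgam space W(FL^1, ℓ^∞)(ℝ^d). -/

import Mathlib

open MeasureTheory Real Complex SchwartzMap
open scoped FourierTransform ENNReal NNReal

noncomputable section

/-- Euclidean space ℝ^d. -/
abbrev Ed (d : ℕ) := EuclideanSpace ℝ (Fin d)

/-- Japanese bracket ⟨x⟩ = (1+|x|²)^{1/2}. -/
def jb {d : ℕ} (x : Ed d) : ℝ := Real.sqrt (1 + ‖x‖ ^ 2)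

/-- Gaussian window. -/
def gaussW (d : ℕ) : Ed d → ℂ := fun x => Complex.exp (-(π * ‖x‖ ^ 2 : ℝ))

/-- Short-time Fourier transform with window g: V_g f (x, ω) = ⟨f, M_ω T_x g⟩. -/
def stft {d : ℕ} (g f : Ed d → ℂ) (x ω : Ed d) : ℂ :=
  ∫ t : Ed d, f t * (starRingEnd ℂ) (g (t - x)) *
    Complex.exp ((-2 * π * (inner ℝ ω t : ℝ) : ℝ) * Complex.I)

/-- Quasi-norm of the weighted modulation space M^{p,q}_{0,s}(ℝ^d) (Gaussian window). -/
def modNorm (d : ℕ) (p q : ℝ≥0∞) (s : ℝ) (f : Ed d → ℂ) : ℝ≥0∞ :=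
  eLpNorm (fun ω : Ed d =>
    (eLpNorm (fun x : Ed d => stft (gaussW d) f x ω) p volume).toReal * jb ω ^ s) q volume

/-- Fourier multiplier operator H_σ f = 𝓕⁻¹(σ · 𝓕 f). -/
def fm {d : ℕ} (σ : Ed d → ℂ) (f : Ed d → ℂ) : Ed d → ℂ :=
  𝓕⁻ (fun ξ => σ ξ * 𝓕 f ξ)

/-- Wiener amalgam W(𝓕L^p, ℓ^∞) quasi-norm w.r.t. window χ and lattice βℤ^d:
sup over n ∈ ℤ^d of ‖𝓕⁻¹(σ · T_{βn}χ)‖_{L^p}. -/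
def wienerNorm (d : ℕ) (p : ℝ≥0∞) (β : ℝ) (χ σ : Ed d → ℂ) : ℝ≥0∞ :=
  ⨆ n : Fin d → ℤ,
    eLpNorm (𝓕⁻ (fun ξ : Ed d =>
      σ ξ * χ (ξ - (show Ed d from WithLp.toLp 2 fun i => β * (n i : ℝ))))) p volume

end

/-! The short-time Fourier transform `V_g σ (x, ω)` is the Fourier transform at `ω` of
`σ · g(· - x)`, and each piece `𝓕⁻¹(σ · χ(· - βn))` of the Wiener amalgam norm is, up to a
reflection, a Fourier transform of the same kind; the Gaussian window `g` is a Schwartz function,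
like `χ`. For a Schwartz window `ψ`, integrating by parts `N = d + 1` times bounds
`(1 + ‖ω‖)^N |𝓕(σ · ψ(· - v))(ω)|` by the `L¹` norms of the derivatives of `σ · ψ(· - v)` of order
at most `N`; by the Leibniz rule these are controlled by the sup norms of the derivatives of `σ`
times the `L¹` norms of the derivatives of `ψ`, uniformly in the shift `v`.
Since `N > d`, the bound `(1 + ‖ω‖)^(-N)` is integrable on `ℝ^d`. -/

open Filter Finset

section Bounds

variable {E : Type*} [NormedAddCommGroup E] [NormedSpace ℝ E]

theorem norm_iteratedFDeriv_mul_le_two_pow_mul_sum {𝔸 : Type*} [NormedRing 𝔸] [NormedAlgebra ℝ 𝔸]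
    {f g : E → 𝔸} {N : ℕ} (hf : ContDiff ℝ N f) (hg : ContDiff ℝ N g) {M : ℝ}
    (hM : ∀ i ≤ N, ∀ x, ‖iteratedFDeriv ℝ i f x‖ ≤ M) {n : ℕ} (hn : n ≤ N) (x : E) :
    ‖iteratedFDeriv ℝ n (fun y => f y * g y) x‖ ≤
      2 ^ N * M * ∑ k ∈ range (N + 1), ‖iteratedFDeriv ℝ k g x‖ := by
  set S := ∑ k ∈ range (N + 1), ‖iteratedFDeriv ℝ k g x‖
  have hM0 : 0 ≤ M := (norm_nonneg _).trans (hM 0 (Nat.zero_le N) x)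
  have hS0 : 0 ≤ S := sum_nonneg fun _ _ => norm_nonneg _
  calc ‖iteratedFDeriv ℝ n (fun y => f y * g y) x‖
      ≤ ∑ i ∈ range (n + 1), (n.choose i : ℝ) * ‖iteratedFDeriv ℝ i f x‖ *
          ‖iteratedFDeriv ℝ (n - i) g x‖ := norm_iteratedFDeriv_mul_le hf hg x (mod_cast hn)
    _ ≤ ∑ i ∈ range (n + 1), (n.choose i : ℝ) * M * S := by
        gcongr with i hi
        · exact hM i ((Nat.lt_succ_iff.mp (mem_range.mp hi)).trans hn) x
        · exact single_le_sum (f := fun k => ‖iteratedFDeriv ℝ k g x‖)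
            (fun _ _ => norm_nonneg _) (mem_range.mpr (by omega))
    _ = 2 ^ n * M * S := by
        rw [← sum_mul, ← sum_mul, ← Nat.cast_sum, Nat.sum_range_choose]
        push_cast
        ring
    _ ≤ 2 ^ N * M * S := by gcongr; norm_num

end Bounds

section Fourier

variable {V : Type*} [NormedAddCommGroup V] [InnerProductSpace ℝ V] [FiniteDimensional ℝ V]
  [MeasurableSpace V] [BorelSpace V]
  {F : Type*} [NormedAddCommGroup F] [NormedSpace ℂ F]

theorem norm_fourier_le_of_integral_norm_iteratedFDeriv_le {N : ℕ} {f : V → F}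
    (hf : ContDiff ℝ N f) (hint : ∀ n ≤ N, Integrable fun x => ‖iteratedFDeriv ℝ n f x‖)
    {B : ℝ} (hB : ∀ n ≤ N, ∫ x, ‖iteratedFDeriv ℝ n f x‖ ≤ B) (ω : V) :
    ‖𝓕 f ω‖ ≤ 2 ^ N * (B + 2 ^ N * ((N + 1) * B)) * (1 + ‖ω‖) ^ (-(N : ℝ)) := by
  have h'f (k n : ℕ) (hk : (k : ℕ∞) ≤ 0) (hn : (n : ℕ∞) ≤ N) :
      Integrable fun x => ‖x‖ ^ k * ‖iteratedFDeriv ℝ n f x‖ := by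
    obtain rfl : k = 0 := by exact_mod_cast nonpos_iff_eq_zero.mp hk
    simpa using hint n (mod_cast hn)
  have hsum (n : ℕ) (hn : n ≤ N) : ∑ p ∈ range (0 + 1) ×ˢ range (n + 1),
      ∫ x, ‖x‖ ^ p.1 * ‖iteratedFDeriv ℝ p.2 f x‖ ≤ (n + 1) * B := by
    refine (sum_le_card_nsmul _ _ B fun p hp => ?_).trans_eq (by simp)
    simp only [mem_product, mem_range] at hp
    simpa [show p.1 = 0 by omega] using hB p.2 (by omega)
  have hN := Real.pow_mul_norm_iteratedFDeriv_fourier_le (K := 0) hf h'f le_rfl le_rfl ω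
  have h0 := Real.pow_mul_norm_iteratedFDeriv_fourier_le (K := 0) hf h'f le_rfl
    (by exact_mod_cast Nat.zero_le N) ω
  simp only [pow_zero, one_mul, norm_iteratedFDeriv_zero, Nat.cast_zero, mul_zero, zero_add]
    at hN h0
  refine (pow_mul_le_of_le_of_pow_mul_le (k := 0) (norm_nonneg _) (norm_nonneg _)
    ((h0.trans (hsum 0 (Nat.zero_le N))).trans_eq (by simp)) ?_).trans_eq' (by simp)
  rw [zero_add]
  exact hN.trans (by gcongr; exact hsum N le_rfl)

theorem exists_norm_fourier_mul_translate_le {N : ℕ} {σ : V → ℂ} (hσ : ContDiff ℝ N σ)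
    (hσ_bdd : ∀ i ≤ N, ∃ C, ∀ x, ‖iteratedFDeriv ℝ i σ x‖ ≤ C) (ψ : 𝓢(V, ℂ)) :
    ∃ C, ∀ v ω, ‖𝓕 (fun t => σ t * ψ (t - v)) ω‖ ≤ C * (1 + ‖ω‖) ^ (-(N : ℝ)) := by
  obtain ⟨M, hM⟩ : ∃ M, ∀ i ≤ N, ∀ x, ‖iteratedFDeriv ℝ i σ x‖ ≤ M := by
    refine ((eventually_all_finite (Set.finite_Iic N)).2 fun i hi => ?_).exists (f := atTop)
    obtain ⟨C, hC⟩ := hσ_bdd i hi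
    filter_upwards [eventually_ge_atTop C] with M hM x using (hC x).trans hM
  set g : V → ℝ := fun t => ∑ k ∈ range (N + 1), ‖iteratedFDeriv ℝ k ψ t‖
  have hg : Integrable g :=
    integrable_finsetSum _ fun k _ => by
      simpa using ψ.integrable_pow_mul_iteratedFDeriv volume 0 k
  set B := 2 ^ N * M * ∫ t, g t
  refine ⟨2 ^ N * (B + 2 ^ N * ((N + 1) * B)), fun v ω => ?_⟩
  have hψv : ContDiff ℝ N fun t => ψ (t - v) :=
    (ψ.smooth N).comp (contDiff_id.sub contDiff_const)
  have hf : ContDiff ℝ N fun t => σ t * ψ (t - v) := hσ.mul hψv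
  have hdom : Integrable fun t => 2 ^ N * M * g (t - v) := (hg.comp_sub_right v).const_mul _
  have hle (n : ℕ) (hn : n ≤ N) (t : V) :
      ‖iteratedFDeriv ℝ n (fun t => σ t * ψ (t - v)) t‖ ≤ 2 ^ N * M * g (t - v) := by
    simpa only [iteratedFDeriv_comp_sub] using
      norm_iteratedFDeriv_mul_le_two_pow_mul_sum hσ hψv hM hn t
  have hint (n : ℕ) (hn : n ≤ N) :
      Integrable fun t => ‖iteratedFDeriv ℝ n (fun t => σ t * ψ (t - v)) t‖ :=
    hdom.mono' (hf.continuous_iteratedFDeriv (mod_cast hn)).norm.aestronglyMeasurable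
      (ae_of_all _ fun t => by simpa using hle n hn t)
  refine norm_fourier_le_of_integral_norm_iteratedFDeriv_le hf hint (fun n hn => ?_) ω
  calc ∫ t, ‖iteratedFDeriv ℝ n (fun t => σ t * ψ (t - v)) t‖
      ≤ ∫ t, 2 ^ N * M * g (t - v) := integral_mono (hint n hn) hdom (hle n hn)
    _ = B := by rw [integral_const_mul, integral_sub_right_eq_self]

end Fourier

section Gaussian

variable {V : Type*} [NormedAddCommGroup V] [InnerProductSpace ℝ V]

theorem one_add_pow_mul_exp_neg_pi_mul_sq_le (m : ℕ) {t : ℝ} (ht : 0 ≤ t) :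
    (1 + t) ^ m * rexp (-(π * t ^ 2)) ≤ rexp (m ^ 2 / (4 * π)) :=
  calc (1 + t) ^ m * rexp (-(π * t ^ 2))
      ≤ rexp t ^ m * rexp (-(π * t ^ 2)) := by
        gcongr
        linarith [Real.add_one_le_exp t]
    _ = rexp (m * t - π * t ^ 2) := by rw [← Real.exp_nat_mul, ← Real.exp_add]; ring_nf
    _ ≤ rexp (m ^ 2 / (4 * π)) := by
        rw [Real.exp_le_exp, le_div_iff₀ (by positivity)]
        nlinarith [sq_nonneg ((m : ℝ) - 2 * π * t), pi_pos]

theorem Real.norm_iteratedFDeriv_exp (n : ℕ) (y : ℝ) : ‖iteratedFDeriv ℝ n rexp y‖ = rexp y := by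
  rw [norm_iteratedFDeriv_eq_norm_iteratedDeriv, iteratedDeriv_eq_iterate, Real.iter_deriv_exp,
    Real.norm_of_nonneg (Real.exp_pos y).le]

theorem exists_norm_iteratedFDeriv_exp_neg_pi_mul_norm_sq_le (n : ℕ) :
    ∃ (k : ℕ) (C : ℝ), 0 ≤ C ∧ ∀ x : V,
      ‖iteratedFDeriv ℝ n (fun x => rexp (-(π * ‖x‖ ^ 2))) x‖ ≤
        C * (1 + ‖x‖) ^ k * rexp (-(π * ‖x‖ ^ 2)) := by
  have hq : (fun x : V => -(π * ‖x‖ ^ 2)).HasTemperateGrowth := by fun_prop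
  obtain ⟨k, C, hC0, hC⟩ := hq.norm_iteratedFDeriv_le_uniform n
  refine ⟨k * n, n.factorial * (C + 1) ^ n, by positivity, fun x => ?_⟩
  have hD (i : ℕ) (hi : 1 ≤ i) (hin : i ≤ n) :
      ‖iteratedFDeriv ℝ i (fun x : V => -(π * ‖x‖ ^ 2)) x‖ ≤ ((C + 1) * (1 + ‖x‖) ^ k) ^ i := by
    have h1 : 1 ≤ (C + 1) * (1 + ‖x‖) ^ k :=
      one_le_mul_of_one_le_of_one_le (by linarith) (one_le_pow₀ (by linarith [norm_nonneg x]))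
    calc _ ≤ C * (1 + ‖x‖) ^ k := hC i hin x
      _ ≤ (C + 1) * (1 + ‖x‖) ^ k := by gcongr; linarith
      _ ≤ _ := le_self_pow₀ h1 (by omega)
  have := norm_iteratedFDeriv_comp_le Real.contDiff_exp hq.1 (mod_cast le_top) x
    (fun i _ => (Real.norm_iteratedFDeriv_exp i _).le) hD
  refine this.trans_eq ?_
  rw [mul_pow, ← pow_mul]
  ring

theorem contDiff_exp_neg_pi_mul_norm_sq {n : WithTop ℕ∞} :
    ContDiff ℝ n fun x : V => rexp (-(π * ‖x‖ ^ 2)) :=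
  Real.contDiff_exp.comp (contDiff_const.mul (contDiff_norm_sq ℝ)).neg

variable (V) in
noncomputable def gaussianSchwartz : 𝓢(V, ℂ) where
  toFun x := (rexp (-(π * ‖x‖ ^ 2)) : ℂ)
  smooth' := Complex.ofRealCLM.contDiff.comp contDiff_exp_neg_pi_mul_norm_sq
  decay' k n := by
    obtain ⟨m, C, hC0, hC⟩ := exists_norm_iteratedFDeriv_exp_neg_pi_mul_norm_sq_le (V := V) n
    refine ⟨C * rexp ((k + m : ℕ) ^ 2 / (4 * π)), fun x => ?_⟩
    rw [show (fun x : V => (rexp (-(π * ‖x‖ ^ 2)) : ℂ)) =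
        Complex.ofRealLI ∘ fun x : V => rexp (-(π * ‖x‖ ^ 2)) from rfl,
      LinearIsometry.norm_iteratedFDeriv_comp_left _
        contDiff_exp_neg_pi_mul_norm_sq.contDiffAt le_rfl]
    calc ‖x‖ ^ k * ‖iteratedFDeriv ℝ n (fun x : V => rexp (-(π * ‖x‖ ^ 2))) x‖
        ≤ (1 + ‖x‖) ^ k * (C * (1 + ‖x‖) ^ m * rexp (-(π * ‖x‖ ^ 2))) := by
          gcongr
          · linarith
          · exact hC x
      _ = C * ((1 + ‖x‖) ^ (k + m) * rexp (-(π * ‖x‖ ^ 2))) := by ring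
      _ ≤ _ := by
          gcongr
          exact one_add_pow_mul_exp_neg_pi_mul_sq_le _ (norm_nonneg x)

theorem gaussW_eq_gaussianSchwartz (d : ℕ) : gaussW d = gaussianSchwartz (Ed d) := by
  ext x
  rw [gaussW, ← Complex.ofReal_neg, ← Complex.ofReal_exp]
  rfl

end Gaussian

theorem stft_gaussW_eq_fourier {d : ℕ} (f : Ed d → ℂ) (x ω : Ed d) :
    stft (gaussW d) f x ω = 𝓕 (fun t => f t * gaussianSchwartz (Ed d) (t - x)) ω := by
  rw [stft, Real.fourier_eq', gaussW_eq_gaussianSchwartz]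
  congr 1 with t
  have hreal : (starRingEnd ℂ) (gaussianSchwartz (Ed d) (t - x)) =
      gaussianSchwartz (Ed d) (t - x) := Complex.conj_ofReal _
  rw [hreal, smul_eq_mul, real_inner_comm t ω]
  ring_nf

theorem statement8_general (d : ℕ) (σ : Ed d → ℂ)
    (hσ : ContDiff ℝ (d + 1) σ)
    (hbd : ∀ i : ℕ, i ≤ d + 1 → ∃ C, ∀ x, ‖iteratedFDeriv ℝ i σ x‖ ≤ C) :
    modNorm d ⊤ 1 0 σ < ⊤ ∧
    ∀ β : ℝ, 0 < β → ∀ χ : 𝓢(Ed d, ℂ), HasCompactSupport (𝓕 ⇑χ) →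
      wienerNorm d 1 β ⇑χ σ < ⊤ := by
  have hσ' : ContDiff ℝ (d + 1 : ℕ) σ := mod_cast hσ
  have hweight (C : ℝ) :
      eLpNorm (fun ω : Ed d => C * (1 + ‖ω‖) ^ (-((d + 1 : ℕ) : ℝ))) 1 volume < ⊤ := by
    refine (memLp_one_iff_integrable.2 (Integrable.const_mul ?_ C)).eLpNorm_lt_top
    exact integrable_one_add_norm (by simp)
  constructor
  · obtain ⟨C, hC⟩ := exists_norm_fourier_mul_translate_le hσ' hbd (gaussianSchwartz (Ed d))
    refine (eLpNorm_mono_real fun ω => ?_).trans_lt (hweight C)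
    rw [Real.rpow_zero, mul_one, Real.norm_of_nonneg ENNReal.toReal_nonneg]
    refine ENNReal.toReal_le_of_le_ofReal ((norm_nonneg _).trans (hC 0 ω)) ?_
    rw [eLpNorm_exponent_top]
    refine eLpNormEssSup_le_of_ae_bound (ae_of_all _ fun x => ?_)
    rw [stft_gaussW_eq_fourier]
    exact hC x ω
  · intro β _ χ _
    obtain ⟨C, hC⟩ := exists_norm_fourier_mul_translate_le hσ' hbd χ
    refine (iSup_le fun n => eLpNorm_mono_real fun ξ => ?_).trans_lt (hweight C)
    rw [Real.fourierInv_eq_fourier_neg]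
    simpa using hC _ (-ξ)

/-- a C^{d+1} function with all derivatives up to order d+1 bounded lies in
M^{∞,1}(ℝ^d), and hence in W(𝓕L¹, ℓ^∞)(ℝ^d). -/
theorem statement8 (d : ℕ) (hd : 1 ≤ d) (σ : Ed d → ℂ)
    (hσ : ContDiff ℝ (d + 1) σ)
    (hbd : ∀ i : ℕ, i ≤ d + 1 → ∃ C, ∀ x, ‖iteratedFDeriv ℝ i σ x‖ ≤ C) :
    modNorm d ⊤ 1 0 σ < ⊤ ∧
    ∀ β : ℝ, 0 < β → ∀ χ : 𝓢(Ed d, ℂ), HasCompactSupport (𝓕 ⇑χ) →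
      wienerNorm d 1 β ⇑χ σ < ⊤ :=
  statement8_general d σ hσ hbd
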